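/- Let h = f + ψ where f : ℝ^d → ℝ is convex and differentiable with L-Lipschitz gradient and ψ : ℝ^d → ℝ ∪ {+∞} is proper convex lsc. Fix α ∈ (0, 1/L], x_k ∈ ℝ^d, a vector g_k ∈ ℝ^d, and let x_{k+1} = prox_{αψ}(x_k − α g_k). Then for any minimizer x* of h: ‖x_{k+1} − x*‖₂² ≤ ‖x_k − x*‖₂² − 2α(h(x_{k+1}) − h(x*)) + 2α⟨g_k − ∇f(x_k), x* − x_{k+1}⟩. -/

import Mathlib

/-!
Since `x_{k+1}` minimises `½‖x_k - α g_k - y‖² + α ψ y`, comparing it with the points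
`x_{k+1} + t (x* - x_{k+1})` and letting `t → 0⁺` gives, by convexity of `ψ`, the variational
inequality `α ψ(x_{k+1}) + ⟪x_k - α g_k - x_{k+1}, x* - x_{k+1}⟫ ≤ α ψ(x*)`. Adding `2α` times the
descent lemma `f(x_{k+1}) ≤ f(x_k) + ⟪∇f(x_k), x_{k+1} - x_k⟫ + L/2 ‖x_{k+1} - x_k‖²` and the
gradient inequality `f(x_k) + ⟪∇f(x_k), x* - x_k⟫ ≤ f(x*)`, the three-point identity for
`‖x_k - x*‖²` yields the bound, with `αL ≤ 1` absorbing the quadratic term.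
When `ψ(x*) = ⊤` or `ψ(x_{k+1}) = ⊥` the `EReal` inequality is trivial; otherwise the prox
inequality forces both values to be finite.
-/

open InnerProductSpace

variable {d : ℕ}

/-- `m` is the proximal point `prox_{αψ}(w)`. -/
def IsProx (ψ : EuclideanSpace ℝ (Fin d) → EReal) (α : ℝ)
    (w m : EuclideanSpace ℝ (Fin d)) : Prop :=
  ∀ y, (((1 / 2) * ‖w - m‖ ^ 2 : ℝ) : EReal) + (α : EReal) * ψ m ≤
    (((1 / 2) * ‖w - y‖ ^ 2 : ℝ) : EReal) + (α : EReal) * ψ y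

/-- Convexity for an `EReal`-valued function. -/
def ERealConvexOn (ψ : EuclideanSpace ℝ (Fin d) → EReal) : Prop :=
  ∀ x y : EuclideanSpace ℝ (Fin d), ∀ t : ℝ, 0 ≤ t → t ≤ 1 →
    ψ (t • x + (1 - t) • y) ≤ (t : EReal) * ψ x + ((1 - t : ℝ) : EReal) * ψ y

section Smooth

variable {E : Type*} [NormedAddCommGroup E] [InnerProductSpace ℝ E] [CompleteSpace E]
  {f : E → ℝ} {f' : E → E}

theorem HasGradientAt.hasDerivAt_add_smul {g x v : E} {t : ℝ}
    (hf : HasGradientAt f g (x + t • v)) :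
    HasDerivAt (fun s : ℝ => f (x + s • v)) (inner ℝ g v) t := by
  have hline : HasDerivAt (fun s : ℝ => x + s • v) v t := by
    simpa using ((hasDerivAt_id t).smul_const v).const_add x
  have h := (hasGradientAt_iff_hasFDerivAt.1 hf).comp_hasDerivAt t hline
  simp only [InnerProductSpace.toDual_apply_apply] at h
  exact h

theorem ConvexOn.add_inner_gradient_le (hf : ConvexOn ℝ Set.univ f)
    (hgrad : ∀ x, HasGradientAt f (f' x) x) (x y : E) :
    f x + inner ℝ (f' x) (y - x) ≤ f y := by
  have hline : ConvexOn ℝ Set.univ (fun t : ℝ => f (x + t • (y - x))) := by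
    simpa [Function.comp_def, AffineMap.lineMap_apply, add_comm] using
      hf.comp_affineMap (AffineMap.lineMap x y : ℝ →ᵃ[ℝ] E)
  have hderiv : HasDerivAt (fun t : ℝ => f (x + t • (y - x))) (inner ℝ (f' x) (y - x)) 0 :=
    HasGradientAt.hasDerivAt_add_smul (by simpa using hgrad x)
  have hslope := hline.le_slope_of_hasDerivAt (Set.mem_univ 0) (Set.mem_univ 1) one_pos hderiv
  simp only [slope_def_field, one_smul, add_sub_cancel, zero_smul, add_zero, sub_zero, div_one]
    at hslope
  linarith

theorem apply_le_add_inner_gradient_add_sq {L : ℝ} (hgrad : ∀ x, HasGradientAt f (f' x) x)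
    (hlip : ∀ x y, ‖f' x - f' y‖ ≤ L * ‖x - y‖) (x y : E) :
    f y ≤ f x + inner ℝ (f' x) (y - x) + L / 2 * ‖y - x‖ ^ 2 := by
  set v := y - x
  set c := inner ℝ (f' x) v
  set φ : ℝ → ℝ := fun t => f (x + t • v) - (t * c + L / 2 * t ^ 2 * ‖v‖ ^ 2)
  have hφ' : ∀ t, HasDerivAt φ (inner ℝ (f' (x + t • v)) v - (c + L * t * ‖v‖ ^ 2)) t := by
    intro t
    have hquad :
        HasDerivAt (fun s => s * c + L / 2 * s ^ 2 * ‖v‖ ^ 2) (c + L * t * ‖v‖ ^ 2) t := by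
      refine (((hasDerivAt_id' t).mul_const c).add
        (((hasDerivAt_pow 2 t).const_mul (L / 2)).mul_const (‖v‖ ^ 2))).congr_deriv ?_
      push_cast
      ring
    exact (hgrad (x + t • v)).hasDerivAt_add_smul.sub hquad
  have hgrowth : ∀ t, 0 < t → inner ℝ (f' (x + t • v)) v - c ≤ L * t * ‖v‖ ^ 2 :=
    fun t ht => calc
      inner ℝ (f' (x + t • v)) v - c = inner ℝ (f' (x + t • v) - f' x) v :=
        (inner_sub_left _ _ _).symm
      _ ≤ ‖f' (x + t • v) - f' x‖ * ‖v‖ := real_inner_le_norm _ _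
      _ ≤ L * ‖t • v‖ * ‖v‖ := by
        gcongr; simpa using hlip (x + t • v) x
      _ = L * t * ‖v‖ ^ 2 := by rw [norm_smul, Real.norm_of_nonneg ht.le]; ring
  have hanti : AntitoneOn φ (Set.Ici 0) :=
    antitoneOn_of_hasDerivWithinAt_nonpos (convex_Ici 0)
      (fun t _ => (hφ' t).continuousAt.continuousWithinAt)
      (fun t _ => (hφ' t).hasDerivWithinAt)
      (fun t ht => by rw [interior_Ici] at ht; linarith [hgrowth t ht])
  have h01 := hanti Set.self_mem_Ici (Set.mem_Ici.2 zero_le_one) zero_le_one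
  simp only [φ, one_smul, zero_smul, add_zero, zero_mul, one_mul, one_pow, v,
    add_sub_cancel] at h01
  linarith

end Smooth

theorem IsProx.apply_ne_top {ψ : EuclideanSpace ℝ (Fin d) → EReal} {α : ℝ}
    {w m : EuclideanSpace ℝ (Fin d)} (hprox : IsProx ψ α w m) (hα : 0 < α)
    {y : EuclideanSpace ℝ (Fin d)} (hy : ψ y ≠ ⊤) : ψ m ≠ ⊤ := by
  intro hm
  have h := hprox y
  rw [hm, EReal.coe_mul_top_of_pos hα, EReal.coe_add_top, top_le_iff] at h
  induction hψy : ψ y using EReal.rec <;>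
    simp_all [← EReal.coe_mul, ← EReal.coe_add, EReal.coe_mul_bot_of_pos]

theorem IsProx.apply_ne_bot {ψ : EuclideanSpace ℝ (Fin d) → EReal} {α : ℝ}
    {w m : EuclideanSpace ℝ (Fin d)} (hprox : IsProx ψ α w m) (hα : 0 < α)
    (hm : ψ m ≠ ⊥) (y : EuclideanSpace ℝ (Fin d)) : ψ y ≠ ⊥ := by
  intro hy
  have h := hprox y
  rw [hy, EReal.coe_mul_bot_of_pos hα, EReal.add_bot, le_bot_iff] at h
  induction hψm : ψ m using EReal.rec <;>
    simp_all [← EReal.coe_mul, ← EReal.coe_add, EReal.coe_mul_top_of_pos]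

open Filter Topology in
theorem IsProx.mul_add_inner_le {ψ : EuclideanSpace ℝ (Fin d) → EReal} {α a b : ℝ}
    {w m y : EuclideanSpace ℝ (Fin d)} (hprox : IsProx ψ α w m) (hψ : ERealConvexOn ψ)
    (hα : 0 ≤ α) (hm : ψ m = a) (hy : ψ y = b) :
    α * a + inner ℝ (w - m) (y - m) ≤ α * b := by
  set u := w - m
  set v := y - m
  have hsegment : ∀ t ∈ Set.Ioc (0 : ℝ) 1, α * a + inner ℝ u v ≤ α * b + t / 2 * ‖v‖ ^ 2 := by
    rintro t ⟨ht0, ht1⟩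
    have hconv : ψ (t • y + (1 - t) • m) ≤ ((t * b + (1 - t) * a : ℝ) : EReal) := by
      simpa [hm, hy] using hψ y m t ht0.le ht1
    have hcompare : 1 / 2 * ‖u‖ ^ 2 + α * a ≤
        1 / 2 * ‖w - (t • y + (1 - t) • m)‖ ^ 2 + α * (t * b + (1 - t) * a) := by
      have h := (hprox (t • y + (1 - t) • m)).trans
        (add_le_add_right (mul_le_mul_of_nonneg_left hconv (EReal.coe_nonneg.2 hα)) _)
      rw [hm] at h
      exact_mod_cast h
    have hexpand : ‖w - (t • y + (1 - t) • m)‖ ^ 2 =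
        ‖u‖ ^ 2 - 2 * t * inner ℝ u v + t ^ 2 * ‖v‖ ^ 2 := by
      rw [show w - (t • y + (1 - t) • m) = u - t • v by
          simp only [u, v, smul_sub, sub_smul, one_smul]; abel,
        norm_sub_sq_real, real_inner_smul_right, norm_smul, Real.norm_of_nonneg ht0.le]
      ring
    rw [hexpand] at hcompare
    nlinarith
  have hlim : Tendsto (fun t : ℝ => α * b + t / 2 * ‖v‖ ^ 2) (𝓝[>] 0) (𝓝 (α * b)) := by
    have : Continuous (fun t : ℝ => α * b + t / 2 * ‖v‖ ^ 2) := by fun_prop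
    simpa using (this.tendsto 0).mono_left nhdsWithin_le_nhds
  exact ge_of_tendsto hlim (mem_of_superset (Ioc_mem_nhdsGT one_pos) hsegment)

theorem IsProx.norm_sub_sq_add_mul_le {ψ : EuclideanSpace ℝ (Fin d) → EReal}
    {f : EuclideanSpace ℝ (Fin d) → ℝ} {f' : EuclideanSpace ℝ (Fin d) → EuclideanSpace ℝ (Fin d)}
    {L α a b : ℝ} {xk gk xk1 xstar : EuclideanSpace ℝ (Fin d)}
    (hstep : IsProx ψ α (xk - α • gk) xk1) (hψ : ERealConvexOn ψ)
    (hf : ConvexOn ℝ Set.univ f) (hgrad : ∀ x, HasGradientAt f (f' x) x)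
    (hlip : ∀ x y, ‖f' x - f' y‖ ≤ L * ‖x - y‖) (hα : 0 ≤ α) (hαL : α * L ≤ 1)
    (ha : ψ xk1 = a) (hb : ψ xstar = b) :
    ‖xk1 - xstar‖ ^ 2 + 2 * α * (f xk1 + a) ≤
      ‖xk - xstar‖ ^ 2 + 2 * α * inner ℝ (gk - f' xk) (xstar - xk1) + 2 * α * (f xstar + b) := by
  have hprox := hstep.mul_add_inner_le hψ hα ha hb
  have hdescent := apply_le_add_inner_gradient_add_sq hgrad hlip xk xk1
  have hsupport := hf.add_inner_gradient_le hgrad xk xstar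
  set p := xk1 - xk
  set q := xstar - xk1
  rw [show xk - α • gk - xk1 = -p - α • gk by simp only [p]; abel] at hprox
  rw [show xstar - xk = p + q by simp only [p, q]; abel] at hsupport
  rw [show xk - xstar = -(p + q) by simp only [p, q]; abel, norm_neg, norm_add_sq_real,
    show xk1 - xstar = -q by simp only [q]; abel, norm_neg]
  simp only [inner_sub_left, inner_neg_left, real_inner_smul_left, inner_add_right]
    at hprox hsupport ⊢
  have hquad : α * L * ‖p‖ ^ 2 ≤ ‖p‖ ^ 2 := mul_le_of_le_one_left (sq_nonneg _) hαL
  nlinarith [mul_le_mul_of_nonneg_left hdescent hα, mul_le_mul_of_nonneg_left hsupport hα]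

theorem stmt14_general (ψ : EuclideanSpace ℝ (Fin d) → EReal)
    (hψconv : ERealConvexOn ψ)
    (f : EuclideanSpace ℝ (Fin d) → ℝ)
    (f' : EuclideanSpace ℝ (Fin d) → EuclideanSpace ℝ (Fin d))
    (L : ℝ)
    (hfconv : ConvexOn ℝ Set.univ f)
    (hdiff : ∀ x, HasGradientAt f (f' x) x)
    (hlip : ∀ x y, ‖f' x - f' y‖ ≤ L * ‖x - y‖)
    (α : ℝ) (hα : 0 < α) (hα1 : α ≤ 1 / L)
    (xk gk xk1 : EuclideanSpace ℝ (Fin d))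
    (hstep : IsProx ψ α (xk - α • gk) xk1)
    (xstar : EuclideanSpace ℝ (Fin d)) :
    ((‖xk1 - xstar‖ ^ 2 : ℝ) : EReal) +
        ((2 * α : ℝ) : EReal) * (((f xk1 : ℝ) : EReal) + ψ xk1) ≤
      ((‖xk - xstar‖ ^ 2 + 2 * α * (inner ℝ (gk - f' xk) (xstar - xk1) : ℝ) : ℝ) : EReal) +
        ((2 * α : ℝ) : EReal) * (((f xstar : ℝ) : EReal) + ψ xstar) := by
  have hαL : α * L ≤ 1 := (le_div_iff₀ (one_div_pos.1 (hα.trans_le hα1))).1 hα1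
  have h2α : 0 < 2 * α := by positivity
  rcases eq_or_ne (ψ xstar) ⊤ with hstar_top | hstar_ne_top
  · rw [hstar_top, EReal.coe_add_top, EReal.coe_mul_top_of_pos h2α, EReal.coe_add_top]
    exact le_top
  rcases eq_or_ne (ψ xk1) ⊥ with hk1_bot | hk1_ne_bot
  · rw [hk1_bot, EReal.add_bot, EReal.coe_mul_bot_of_pos h2α, EReal.add_bot]
    exact bot_le
  obtain ⟨a, ha⟩ : ∃ a : ℝ, ψ xk1 = a :=
    ⟨_, (EReal.coe_toReal (hstep.apply_ne_top hα hstar_ne_top) hk1_ne_bot).symm⟩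
  obtain ⟨b, hb⟩ : ∃ b : ℝ, ψ xstar = b :=
    ⟨_, (EReal.coe_toReal hstar_ne_top (hstep.apply_ne_bot hα hk1_ne_bot xstar)).symm⟩
  rw [ha, hb]
  exact_mod_cast hstep.norm_sub_sq_add_mul_le hψconv hfconv hdiff hlip hα.le hαL ha hb

/-- One-step progress bound of an inexact proximal gradient step towards a
minimizer `x*` of `h = f + ψ`:
`‖x_{k+1}−x*‖² ≤ ‖x_k−x*‖² − 2α(h(x_{k+1})−h(x*)) + 2α⟨g_k−∇f(x_k), x*−x_{k+1}⟩`,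
stated in `EReal` with the `h`-terms moved to each side. -/
theorem stmt14 (ψ : EuclideanSpace ℝ (Fin d) → EReal)
    (hproper : (∀ x, ψ x ≠ ⊥) ∧ ∃ x, ψ x ≠ ⊤)
    (hψconv : ERealConvexOn ψ)
    (hψlsc : LowerSemicontinuous ψ)
    (f : EuclideanSpace ℝ (Fin d) → ℝ)
    (f' : EuclideanSpace ℝ (Fin d) → EuclideanSpace ℝ (Fin d))
    (L : ℝ) (hL : 0 < L)
    (hfconv : ConvexOn ℝ Set.univ f)
    (hdiff : ∀ x, HasGradientAt f (f' x) x)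
    (hlip : ∀ x y, ‖f' x - f' y‖ ≤ L * ‖x - y‖)
    (α : ℝ) (hα : 0 < α) (hα1 : α ≤ 1 / L)
    (xk gk xk1 : EuclideanSpace ℝ (Fin d))
    (hstep : IsProx ψ α (xk - α • gk) xk1)
    (xstar : EuclideanSpace ℝ (Fin d))
    (hmin : ∀ z, ((f xstar : ℝ) : EReal) + ψ xstar ≤ ((f z : ℝ) : EReal) + ψ z) :
    ((‖xk1 - xstar‖ ^ 2 : ℝ) : EReal) +
        ((2 * α : ℝ) : EReal) * (((f xk1 : ℝ) : EReal) + ψ xk1) ≤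
      ((‖xk - xstar‖ ^ 2 + 2 * α * (inner ℝ (gk - f' xk) (xstar - xk1) : ℝ) : ℝ) : EReal) +
        ((2 * α : ℝ) : EReal) * (((f xstar : ℝ) : EReal) + ψ xstar) :=
  stmt14_general ψ hψconv f f' L hfconv hdiff hlip α hα hα1 xk gk xk1 hstep xstar
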